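/- arXiv:2506.02994 — 9 statements merged into one kernel-verified Lean document; each statement's English description precedes it below -/
import Mathlib

section
/- Let n and m be positive integers with m > n, and let v_1, …, v_m ∈ ℤ^n be nonzero vectors such that the cone C := ⟨v_1,…,v_m⟩_{ℝ≥0} ⊆ ℝ^n of all nonnegative real combinations of the v_i is strongly convex. Then there exists a nonzero lattice point x ∈ ℤ^n admitting a representation x = c_1 v_1 + ⋯ + c_m v_m with real coefficients c_1, …, c_m ∈ [0,1). -/
open Finset

/-- If `m > n ≥ 1` and `v_1, …, v_m ∈ ℤ^n` are nonzero vectors whose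
nonnegative real cone is strongly convex, then there is a nonzero lattice point in
`⟨v_1,…,v_m⟩_{[0,1)}`. -/
theorem nonzero_lattice_point_in_halfopen_box (n m : ℕ) (hn : 1 ≤ n) (hm : n < m)
    (v : Fin m → Fin n → ℤ) (hv : ∀ i, v i ≠ 0)
    (C : Set (Fin n → ℝ))
    (hC : C = {y | ∃ c : Fin m → ℝ, (∀ i, 0 ≤ c i) ∧
      y = ∑ i, c i • (fun j => (v i j : ℝ))})
    (hconv : ∀ y ∈ C, -y ∈ C → y = 0) :
    ∃ x : Fin n → ℤ, x ≠ 0 ∧ ∃ c : Fin m → ℝ,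
      (∀ i, 0 ≤ c i ∧ c i < 1) ∧
      (fun j => (x j : ℝ)) = ∑ i, c i • (fun j => (v i j : ℝ)) := by
  subst hC
  have hw0 : ∀ i, (fun j => (v i j : ℝ)) ≠ (0 : Fin n → ℝ) := by
    intro i hi
    apply hv i
    funext j
    have h1 : (v i j : ℝ) = 0 := congrFun hi j
    exact_mod_cast h1
  -- key lemma: no nontrivial nonnegative relation
  have key : ∀ b : Fin m → ℝ, (∀ i, 0 ≤ b i) →
      ∑ i, b i • (fun j => (v i j : ℝ)) = (0 : Fin n → ℝ) →
      ∀ k, 0 < b k → False := by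
    intro b hb hsum k hk
    have hmem1 : (fun j => (v k j : ℝ)) ∈ {y | ∃ c : Fin m → ℝ, (∀ i, 0 ≤ c i) ∧
        y = ∑ i, c i • (fun j => (v i j : ℝ))} := by
      refine ⟨Pi.single k 1, ?_, ?_⟩
      · intro i
        by_cases h : i = k <;> simp [h, Pi.single_apply]
      · simp [Pi.single_apply, ite_smul]
    have hmem2 : -(fun j => (v k j : ℝ)) ∈ {y | ∃ c : Fin m → ℝ, (∀ i, 0 ≤ c i) ∧
        y = ∑ i, c i • (fun j => (v i j : ℝ))} := by
      refine ⟨fun i => if i = k then 0 else b i / b k, ?_, ?_⟩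
      · intro i
        by_cases h : i = k <;> simp [h]
        exact div_nonneg (hb i) hk.le
      · have hbk : b k ≠ 0 := hk.ne'
        have h1 : b k • ∑ i, (if i = k then (0:ℝ) else b i / b k) • (fun j => (v i j : ℝ))
            = ∑ i, (if i = k then (0:ℝ) else b i) • (fun j => (v i j : ℝ)) := by
          rw [Finset.smul_sum]
          refine Finset.sum_congr rfl fun i _ => ?_
          by_cases h : i = k <;> simp [h, smul_smul]
          field_simp
        have h2 : ∑ i, (if i = k then (0:ℝ) else b i) • (fun j => (v i j : ℝ))
            = ∑ i, b i • (fun j => (v i j : ℝ)) - b k • (fun j => (v k j : ℝ)) := by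
          have hc : ∀ i ∈ Finset.univ, (if i = k then (0:ℝ) else b i) • (fun j => (v i j : ℝ))
              = b i • (fun j => (v i j : ℝ))
                - (if i = k then b k • (fun j => (v k j : ℝ)) else 0) := by
            intro i _
            by_cases h : i = k <;> simp [h]
          rw [Finset.sum_congr rfl hc, Finset.sum_sub_distrib,
            Finset.sum_ite_eq' Finset.univ k]
          simp
        have h3 : b k • ∑ i, (if i = k then (0:ℝ) else b i / b k) • (fun j => (v i j : ℝ))
            = b k • (-(fun j => (v k j : ℝ)) : Fin n → ℝ) := by
          rw [h1, h2, hsum]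
          simp
        have h4 := smul_right_injective (Fin n → ℝ) hbk h3
        rw [h4]
    have := hconv _ hmem1 hmem2
    exact hw0 k this
  -- linear dependence since m > n
  have hdep : ¬ LinearIndependent ℝ (fun i => (fun j => (v i j : ℝ))) := by
    intro h
    have hle := h.fintype_card_le_finrank
    simp only [Fintype.card_fin] at hle
    have hfr : Module.finrank ℝ (Fin n → ℝ) = n := by
      simp [Module.finrank_fintype_fun_eq_card]
    omega
  obtain ⟨g, hg, i₀, hi₀⟩ := Fintype.not_linearIndependent_iff.mp hdep
  -- get a relation with some negative coefficient
  obtain ⟨b, hbsum, k, hbk⟩ : ∃ b : Fin m → ℝ,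
      ∑ i, b i • (fun j => (v i j : ℝ)) = (0 : Fin n → ℝ) ∧ ∃ k, b k < 0 := by
    by_cases hneg : ∃ k, g k < 0
    · exact ⟨g, hg, hneg⟩
    · push_neg at hneg
      refine ⟨-g, ?_, i₀, ?_⟩
      · have : ∑ i, (-g) i • (fun j => (v i j : ℝ))
            = -∑ i, g i • (fun j => (v i j : ℝ)) := by
          rw [← Finset.sum_neg_distrib]
          exact Finset.sum_congr rfl fun i _ => by simp
        rw [this, hg, neg_zero]
      · have : 0 < g i₀ := lt_of_le_of_ne (hneg i₀) (Ne.symm hi₀)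
        simpa using this
  -- the lattice point
  set S : Finset (Fin m) := Finset.univ.filter (fun i => b i < 0) with hS
  set x : Fin n → ℤ := fun j => ∑ i ∈ S, v i j with hx
  have hxcast : (fun j => (x j : ℝ)) = ∑ i ∈ S, (fun j => (v i j : ℝ)) := by
    funext j
    simp only [hx, Finset.sum_apply]
    push_cast
    rfl
  -- x ≠ 0
  have hxne : x ≠ 0 := by
    intro hx0
    have h0 : ∑ i ∈ S, (fun j => (v i j : ℝ)) = (0 : Fin n → ℝ) := by
      rw [← hxcast, hx0]
      funext j; simp
    have h0' : ∑ i, (if b i < 0 then (1:ℝ) else 0) • (fun j => (v i j : ℝ))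
        = (0 : Fin n → ℝ) := by
      rw [← h0, hS, Finset.sum_filter]
      refine Finset.sum_congr rfl fun i _ => ?_
      by_cases h : b i < 0 <;> simp [h]
    refine key (fun i => if b i < 0 then (1:ℝ) else 0) ?_ h0' k ?_
    · intro i; by_cases h : b i < 0 <;> simp [h]
    · simp [hbk]
  -- the bound M
  set M : ℝ := 1 + ∑ i, |b i| with hM
  have hMabs : ∀ i, |b i| < M := by
    intro i
    have h1 : |b i| ≤ ∑ j, |b j| :=
      Finset.single_le_sum (f := fun j => |b j|) (fun j _ => abs_nonneg _)
        (Finset.mem_univ i)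
    have h2 : (0:ℝ) ≤ ∑ j, |b j| := Finset.sum_nonneg fun j _ => abs_nonneg _
    rw [hM]; linarith
  have hM0 : (0:ℝ) < M := lt_of_le_of_lt (abs_nonneg (b k)) (hMabs k)
  -- the coefficients
  refine ⟨x, hxne, fun i => b i / M + (if b i < 0 then 1 else 0), ?_, ?_⟩
  · intro i
    obtain ⟨hlo, hhi⟩ := abs_lt.mp (hMabs i)
    constructor
    · by_cases h : b i < 0 <;> simp [h]
      · have : (-1:ℝ) < b i / M := by rw [lt_div_iff₀ hM0]; linarith
        linarith
      · push_neg at h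
        positivity
    · by_cases h : b i < 0 <;> simp [h]
      · have : b i / M < 0 := div_neg_of_neg_of_pos h hM0
        linarith
      · rw [div_lt_one hM0]; linarith
  · rw [hxcast]
    have hsplit : ∑ i, (b i / M + (if b i < 0 then (1:ℝ) else 0)) • (fun j => (v i j : ℝ))
        = ∑ i, (b i / M) • (fun j => (v i j : ℝ))
          + ∑ i, (if b i < 0 then (1:ℝ) else 0) • (fun j => (v i j : ℝ)) := by
      rw [← Finset.sum_add_distrib]
      refine Finset.sum_congr rfl fun i _ => ?_
      rw [add_smul]
    rw [hsplit]
    have h1 : ∑ i, (b i / M) • (fun j => (v i j : ℝ)) = (0 : Fin n → ℝ) := by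
      have hh : ∑ i, (b i / M) • (fun j => (v i j : ℝ))
          = M⁻¹ • ∑ i, b i • (fun j => (v i j : ℝ)) := by
        rw [Finset.smul_sum]
        refine Finset.sum_congr rfl fun i _ => ?_
        rw [smul_smul, div_eq_inv_mul]
      rw [hh, hbsum, smul_zero]
    have h2 : ∑ i, (if b i < 0 then (1:ℝ) else 0) • (fun j => (v i j : ℝ))
        = ∑ i ∈ S, (fun j => (v i j : ℝ)) := by
      rw [hS, Finset.sum_filter]
      refine Finset.sum_congr rfl fun i _ => ?_
      by_cases h : b i < 0 <;> simp [h]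
    rw [h1, h2, zero_add]
end

section
/- Let v_1, …, v_m ∈ ℤ^n be nonzero vectors such that the cone C := ⟨v_1,…,v_m⟩_{ℝ≥0} ⊆ ℝ^n is strongly convex. Suppose c_1, …, c_m ∈ ℤ satisfy c_1 v_1 + ⋯ + c_m v_m = 0 and c_{i₀} ≠ 0 for some index i₀. Then the lattice point w := Σ_{i : c_i·c_{i₀} > 0} v_i is nonzero and admits a representation w = t_1 v_1 + ⋯ + t_m v_m with real coefficients t_1, …, t_m ∈ [0,1). -/
open Finset

/-- Given nonzero integer vectors spanning a strongly convex cone and an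
integer relation `∑ c_i v_i = 0` with `c_{i₀} ≠ 0`, the lattice point
`w = ∑_{i : c_i c_{i₀} > 0} v_i` is nonzero and lies in `⟨v_1,…,v_m⟩_{[0,1)}`. -/
theorem relation_gives_lattice_point (n m : ℕ)
    (v : Fin m → Fin n → ℤ) (hv : ∀ i, v i ≠ 0)
    (hconv : ∀ y : Fin n → ℝ,
      (∃ c : Fin m → ℝ, (∀ i, 0 ≤ c i) ∧ y = ∑ i, c i • (fun j => (v i j : ℝ))) →
      (∃ c : Fin m → ℝ, (∀ i, 0 ≤ c i) ∧ -y = ∑ i, c i • (fun j => (v i j : ℝ))) →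
      y = 0)
    (c : Fin m → ℤ) (hrel : ∑ i, c i • v i = 0)
    (i₀ : Fin m) (hi₀ : c i₀ ≠ 0) :
    (∑ i ∈ Finset.univ.filter (fun i => 0 < c i * c i₀), v i) ≠ 0 ∧
    ∃ t : Fin m → ℝ, (∀ i, 0 ≤ t i ∧ t i < 1) ∧
      (fun j => (((∑ i ∈ Finset.univ.filter (fun i => 0 < c i * c i₀), v i) j : ℤ) : ℝ))
        = ∑ i, t i • (fun j => (v i j : ℝ)) := by
  -- normalize signs
  set e : Fin m → ℤ := fun i => if 0 < c i₀ then c i else -c i with he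
  have hi₀' : c i₀ < 0 ∨ 0 < c i₀ := lt_or_gt_of_ne hi₀
  have he₀ : 0 < e i₀ := by
    rcases hi₀' with h | h
    · simp [he, not_lt.2 h.le, h]
    · simpa [he, h] using h
  have herel : ∑ i, e i • v i = 0 := by
    by_cases h : 0 < c i₀
    · simpa [he, h] using hrel
    · have : ∑ i, (-c i) • v i = -∑ i, c i • v i := by
        simp [neg_smul, Finset.sum_neg_distrib]
      simp only [he, if_neg h]
      rw [this, hrel, neg_zero]
  have hP : ∀ i, (0 < c i * c i₀) ↔ 0 < e i := by
    intro i
    rcases hi₀' with h | h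
    · simp only [he, if_neg (not_lt.2 h.le)]
      constructor
      · intro hp
        rcases mul_pos_iff.1 hp with ⟨_, h2⟩ | ⟨h1, _⟩
        · exact absurd h2 (not_lt.2 h.le)
        · omega
      · intro hp; exact mul_pos_of_neg_of_neg (by omega) h
    · simp only [he, if_pos h]
      constructor
      · intro hp
        rcases mul_pos_iff.1 hp with ⟨h1, _⟩ | ⟨_, h2⟩
        · exact h1
        · exact absurd h (not_lt.2 h2.le)
      · intro hp; exact mul_pos hp h
  have hfilter : Finset.univ.filter (fun i => 0 < c i * c i₀)
      = Finset.univ.filter (fun i => 0 < e i) :=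
    Finset.filter_congr (fun i _ => by simpa using hP i)
  rw [hfilter]
  set P := Finset.univ.filter (fun i : Fin m => 0 < e i) with hPdef
  have hi₀P : i₀ ∈ P := by simp [hPdef, he₀]
  -- the big denominator
  set M : ℝ := (∑ i, |(e i : ℝ)|) + 1 with hM
  have hMpos : 0 < M := by
    have : 0 ≤ ∑ i, |(e i : ℝ)| := Finset.sum_nonneg fun i _ => abs_nonneg _
    linarith
  have hlt : ∀ i, |(e i : ℝ)| < M := by
    intro i
    have h1 : |(e i : ℝ)| ≤ ∑ j, |(e j : ℝ)| :=
      Finset.single_le_sum (f := fun j => |(e j : ℝ)|) (fun j _ => abs_nonneg _)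
        (Finset.mem_univ i)
    linarith
  -- real relation
  have hrelR : ∀ j, ∑ i, (e i : ℝ) * (v i j : ℝ) = 0 := by
    intro j
    have := congrFun herel j
    have h2 : ∑ i, e i * v i j = 0 := by
      simpa [Finset.sum_apply] using this
    have := congrArg (fun z : ℤ => (z : ℝ)) h2
    push_cast at this
    exact this
  constructor
  · -- nonvanishing
    intro hS
    have hSj : ∀ j, ∑ i ∈ P, (v i j : ℝ) = 0 := by
      intro j
      have := congrFun hS j
      have h2 : ∑ i ∈ P, v i j = 0 := by simpa [Finset.sum_apply] using this
      have := congrArg (fun z : ℤ => (z : ℝ)) h2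
      push_cast at this
      exact this
    have hy0 : (fun j => (v i₀ j : ℝ)) = 0 := by
      apply hconv
      · refine ⟨fun i => if i = i₀ then 1 else 0, fun i => by positivity, ?_⟩
        funext j
        simp [Finset.sum_apply, ite_smul, apply_ite (fun f : Fin n → ℝ => f j),
          Finset.sum_ite_eq']
      · refine ⟨fun i => if i ∈ P ∧ i ≠ i₀ then 1 else 0, fun i => by positivity, ?_⟩
        funext j
        simp only [Pi.neg_apply, Finset.sum_apply, Pi.smul_apply, smul_eq_mul,
          ite_mul, one_mul, zero_mul]
        have hset : Finset.univ.filter (fun x => x ∈ P ∧ x ≠ i₀) = P.erase i₀ := by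
          ext x; simp [Finset.mem_erase, and_comm]
        rw [← Finset.sum_filter, hset]
        have herase : ∑ x ∈ P.erase i₀, (v x j : ℝ) + (v i₀ j : ℝ)
            = ∑ x ∈ P, (v x j : ℝ) := Finset.sum_erase_add P _ hi₀P
        have := hSj j
        linarith
    have : v i₀ = 0 := by
      funext j
      have := congrFun hy0 j
      rw [Pi.zero_apply] at this
      exact_mod_cast this
    exact hv i₀ this
  · refine ⟨fun i => (if 0 < e i then 1 else 0) - (e i : ℝ) / M, fun i => ?_, ?_⟩
    · by_cases h : 0 < e i
      · have h1 : (e i : ℝ) ≤ |(e i : ℝ)| := le_abs_self _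
        have h2 : 0 < (e i : ℝ) := by exact_mod_cast h
        constructor
        · simp only [if_pos h]
          have : (e i : ℝ) / M < 1 := (div_lt_one hMpos).2 (lt_of_le_of_lt h1 (hlt i))
          linarith
        · simp only [if_pos h]
          have : 0 < (e i : ℝ) / M := div_pos h2 hMpos
          linarith
      · have h2 : (e i : ℝ) ≤ 0 := by exact_mod_cast not_lt.1 h
        have h1 : -(e i : ℝ) ≤ |(e i : ℝ)| := neg_le_abs _
        constructor
        · simp only [if_neg h]
          have : 0 ≤ -(e i : ℝ) / M := div_nonneg (by linarith) hMpos.le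
          rw [zero_sub, ← neg_div]
          linarith [this]
        · simp only [if_neg h]
          have : -(e i : ℝ) / M < 1 := (div_lt_one hMpos).2 (lt_of_le_of_lt h1 (hlt i))
          have h3 : (e i : ℝ) / M = -(-(e i : ℝ) / M) := by ring
          nlinarith [div_nonneg (neg_nonneg.2 h2) hMpos.le]
    · funext j
      simp only [Finset.sum_apply, Pi.smul_apply, smul_eq_mul]
      push_cast
      have hsplit : ∑ i, ((if 0 < e i then (1:ℝ) else 0) - (e i : ℝ) / M) * (v i j : ℝ)
          = (∑ i, (if 0 < e i then (v i j : ℝ) else 0))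
            - (∑ i, (e i : ℝ) * (v i j : ℝ)) / M := by
        rw [Finset.sum_div, ← Finset.sum_sub_distrib]
        apply Finset.sum_congr rfl
        intro i _
        by_cases h : 0 < e i <;> simp [h] <;> ring
      rw [hsplit, hrelR j, zero_div, sub_zero, ← Finset.sum_filter]
end

section
/- Fix a prime p. Let v_1, …, v_m ∈ ℤ^n be nonzero vectors, let C := ⟨v_1,…,v_m⟩_{ℝ≥0} ⊆ ℝ^n, and assume that C ∩ ℤ^n = ⟨v_1,…,v_m⟩_ℕ, i.e., every lattice point of C is a nonnegative-integer combination of v_1, …, v_m. Then every lattice point x ∈ ℤ^n admitting a representation x = c_1 v_1 + ⋯ + c_m v_m with real coefficients c_i ∈ [0,1) also admits a representation x = c'_1 v_1 + ⋯ + c'_m v_m in which, for some single exponent e ∈ ℕ, every coefficient c'_i is a rational number of the form a_i/p^e with a_i ∈ ℕ and a_i < p^e. -/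
open Finset

/-- If `C ∩ ℤ^n = ⟨v_1,…,v_m⟩_ℕ`, then every lattice point representable
with real coefficients in `[0,1)` is representable with coefficients of the form
`a_i / p^e`, `a_i ∈ ℕ`, `a_i < p^e`, for a single exponent `e`. -/
theorem lattice_points_are_p_lattice_points (p : ℕ) (hp : p.Prime) (n m : ℕ)
    (v : Fin m → Fin n → ℤ) (hv : ∀ i, v i ≠ 0)
    (hlat : ∀ x : Fin n → ℤ,
      ((∃ c : Fin m → ℝ, (∀ i, 0 ≤ c i) ∧
          (fun j => (x j : ℝ)) = ∑ i, c i • (fun j => (v i j : ℝ))) ↔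
        ∃ a : Fin m → ℕ, x = ∑ i, (a i : ℤ) • v i)) :
    ∀ x : Fin n → ℤ,
      (∃ c : Fin m → ℝ, (∀ i, 0 ≤ c i ∧ c i < 1) ∧
        (fun j => (x j : ℝ)) = ∑ i, c i • (fun j => (v i j : ℝ))) →
      ∃ e : ℕ, ∃ a : Fin m → ℕ, (∀ i, a i < p ^ e) ∧
        (fun j => (x j : ℝ)) = ∑ i, ((a i : ℝ) / (p ^ e : ℝ)) • (fun j => (v i j : ℝ)) := by
  classical
  intro x hx
  obtain ⟨c, hc, hxc⟩ := hx
  -- choose a natural representation for every lattice point that has one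
  set g : (Fin n → ℤ) → (Fin m → ℕ) := fun y =>
    if h : ∃ a : Fin m → ℕ, y = ∑ i, (a i : ℤ) • v i then h.choose else 0 with hgdef
  have hgspec : ∀ y : Fin n → ℤ, (∃ a : Fin m → ℕ, y = ∑ i, (a i : ℤ) • v i) →
      y = ∑ i, (g y i : ℤ) • v i := by
    intro y hy
    simp only [hgdef, dif_pos hy]
    exact hy.choose_spec
  set R : Fin n → ℤ := fun j => ∑ i, |v i j| with hR
  set T : Finset (Fin n → ℤ) := Finset.Icc (fun j => -R j) R with hT
  set A : ℕ := T.sup fun y => Finset.univ.sup (g y) with hA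
  have hp1 : (1 : ℝ) < p := by exact_mod_cast hp.one_lt
  have hxj : ∀ j, (x j : ℝ) = ∑ i, c i * (v i j : ℝ) := by
    intro j
    have h := congrFun hxc j
    simpa [Finset.sum_apply] using h
  -- choose e large enough
  obtain ⟨e, he⟩ : ∃ e : ℕ, ∀ i, (A : ℝ) + 1 ≤ (p : ℝ) ^ e * (1 - c i) := by
    have h1 : ∀ i : Fin m, ∀ᶠ e : ℕ in Filter.atTop,
        (A : ℝ) + 1 ≤ (p : ℝ) ^ e * (1 - c i) := by
      intro i
      have hpos : 0 < 1 - c i := by linarith [(hc i).2]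
      have h2 := (tendsto_pow_atTop_atTop_of_one_lt hp1).eventually_ge_atTop
        (((A : ℝ) + 1) / (1 - c i))
      filter_upwards [h2] with e hee
      rw [div_le_iff₀ hpos] at hee
      linarith
    exact (Filter.eventually_all.mpr h1).exists
  set k : Fin m → ℕ := fun i => ⌊c i * (p : ℝ) ^ e⌋₊ with hk
  have hknn : ∀ i, 0 ≤ c i * (p : ℝ) ^ e := fun i =>
    mul_nonneg (hc i).1 (by positivity)
  have hkle : ∀ i, (k i : ℝ) ≤ c i * (p : ℝ) ^ e := fun i => Nat.floor_le (hknn i)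
  have hklt : ∀ i, c i * (p : ℝ) ^ e - (k i : ℝ) < 1 := by
    intro i
    have := Nat.lt_floor_add_one (c i * (p : ℝ) ^ e)
    simp only [hk]
    linarith
  set y : Fin n → ℤ := (p : ℤ) ^ e • x - ∑ i, (k i : ℤ) • v i with hy
  have hyint : ∀ j, y j = (p : ℤ) ^ e * x j - ∑ i, (k i : ℤ) * v i j := by
    intro j
    simp [hy, Finset.sum_apply]
  have hyR : ∀ j, (y j : ℝ) = ∑ i, (c i * (p : ℝ) ^ e - (k i : ℝ)) * (v i j : ℝ) := by
    intro j
    rw [hyint j]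
    push_cast
    rw [hxj j, Finset.mul_sum, ← Finset.sum_sub_distrib]
    congr 1
    funext i
    ring
  have hyrep : ∃ a : Fin m → ℕ, y = ∑ i, (a i : ℤ) • v i := by
    apply (hlat y).mp
    refine ⟨fun i => c i * (p : ℝ) ^ e - k i, fun i => sub_nonneg.mpr (hkle i), ?_⟩
    funext j
    simpa [Finset.sum_apply] using hyR j
  have hgy : y = ∑ i, (g y i : ℤ) • v i := hgspec y hyrep
  -- y lies in the box T
  have habs : ∀ j, |y j| ≤ R j := by
    intro j
    have hreal : |(y j : ℝ)| ≤ (R j : ℝ) := by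
      rw [hyR j]
      calc |∑ i, (c i * (p : ℝ) ^ e - (k i : ℝ)) * (v i j : ℝ)|
          ≤ ∑ i, |(c i * (p : ℝ) ^ e - (k i : ℝ)) * (v i j : ℝ)| :=
            Finset.abs_sum_le_sum_abs _ _
        _ ≤ ∑ i, |(v i j : ℝ)| := by
            apply Finset.sum_le_sum
            intro i _
            rw [abs_mul]
            have h1 : |c i * (p : ℝ) ^ e - (k i : ℝ)| ≤ 1 := by
              rw [abs_le]
              constructor
              · linarith [hkle i]
              · linarith [hklt i]
            nlinarith [abs_nonneg ((v i j : ℝ))]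
        _ = (R j : ℝ) := by rw [hR]; push_cast; ring
    exact_mod_cast hreal
  have hyT : y ∈ T := by
    rw [hT, Finset.mem_Icc]
    constructor
    · intro j
      have h := abs_le.mp (habs j)
      simpa using h.1
    · intro j
      exact (abs_le.mp (habs j)).2
  have gA : ∀ i, g y i ≤ A := by
    intro i
    calc g y i ≤ Finset.univ.sup (g y) := Finset.le_sup (Finset.mem_univ i)
      _ ≤ A := Finset.le_sup (f := fun z => Finset.univ.sup (g z)) hyT
  have hpe : (0 : ℝ) < (p : ℝ) ^ e := by positivity
  refine ⟨e, fun i => k i + g y i, ?_, ?_⟩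
  · intro i
    have hA' : (g y i : ℝ) ≤ (A : ℝ) := by exact_mod_cast gA i
    have h1 : (k i : ℝ) + (g y i : ℝ) + 1 ≤ (p : ℝ) ^ e := by
      have h2 := he i
      have h3 := hkle i
      nlinarith
    have h4 : ((k i + g y i : ℕ) : ℝ) < ((p ^ e : ℕ) : ℝ) := by push_cast; linarith
    exact_mod_cast h4
  · funext j
    have hyj2 : (y j : ℝ) = ∑ i, (g y i : ℝ) * (v i j : ℝ) := by
      have h := congrFun hgy j
      simp only [Finset.sum_apply, Pi.smul_apply, smul_eq_mul] at h
      exact_mod_cast h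
    have hyj1 : (y j : ℝ) = (p : ℝ) ^ e * (x j : ℝ) - ∑ i, (k i : ℝ) * (v i j : ℝ) := by
      rw [hyint j]; push_cast; ring
    have key : (p : ℝ) ^ e * (x j : ℝ) = ∑ i, ((k i : ℝ) + (g y i : ℝ)) * (v i j : ℝ) := by
      have hsplit : ∑ i, ((k i : ℝ) + (g y i : ℝ)) * (v i j : ℝ)
          = ∑ i, (k i : ℝ) * (v i j : ℝ) + ∑ i, (g y i : ℝ) * (v i j : ℝ) := by
        rw [← Finset.sum_add_distrib]
        congr 1
        funext i
        ring
      rw [hsplit, ← hyj2]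
      linarith [hyj1 ]
    simp only [Finset.sum_apply, Pi.smul_apply, smul_eq_mul]
    have hconv : ∑ i, ((↑(k i + g y i) : ℝ) / (p : ℝ) ^ e) * (v i j : ℝ)
        = (∑ i, ((k i : ℝ) + (g y i : ℝ)) * (v i j : ℝ)) / (p : ℝ) ^ e := by
      rw [Finset.sum_div]
      congr 1
      funext i
      push_cast
      ring
    rw [hconv, ← key]
    field_simp
end

section
/- Fix a prime p. Let n and m be positive integers with m > n, and let v_1, …, v_m ∈ ℤ^n be nonzero vectors such that the cone C := ⟨v_1,…,v_m⟩_{ℝ≥0} ⊆ ℝ^n is strongly convex and satisfies C ∩ ℤ^n = ⟨v_1,…,v_m⟩_ℕ. Then there exist an exponent e ≥ 1, a nonzero lattice point x ∈ ℤ^n, and natural numbers a_1, …, a_m with a_i < p^e for all i, such that p^e·x = a_1 v_1 + ⋯ + a_m v_m. -/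
/-!
Take `e = 1`. As `p ^ m > p ^ n`, two distinct `c, c' ∈ (ℤ/p)^m` have the same image under
`c ↦ ∑ cᵢ vᵢ mod p`; lifting `c - c'` to digits `0 ≤ aᵢ < p` gives `a ≠ 0` with `∑ aᵢ vᵢ ∈ p ℤ^n`.
The quotient `x` is nonzero: a nontrivial relation `∑ aᵢ vᵢ = 0` with `aᵢ ≥ 0` would put some
`aᵢ vᵢ ≠ 0` together with its negative into the cone, against strong convexity.
-/

theorem exists_ne_zero_forall_lt_smul_eq_sum {ι κ : Type*} [Fintype ι] [Fintype κ] {p : ℕ}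
    (hp : 1 < p) (hcard : Fintype.card κ < Fintype.card ι) (v : ι → κ → ℤ) :
    ∃ d : ι → ℕ, d ≠ 0 ∧ (∀ i, d i < p) ∧ ∃ x : κ → ℤ, (p : ℤ) • x = ∑ i, (d i : ℤ) • v i := by
  classical
  have : NeZero p := ⟨by omega⟩
  let f : (ι → ZMod p) → κ → ZMod p := fun c => ∑ i, c i • fun j => (v i j : ZMod p)
  have hcard' : Fintype.card (κ → ZMod p) < Fintype.card (ι → ZMod p) := by
    simp only [Fintype.card_fun, ZMod.card]
    exact Nat.pow_lt_pow_right hp hcard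
  obtain ⟨a, b, hab, hfab⟩ := Fintype.exists_ne_map_eq_of_card_lt f hcard'
  refine ⟨fun i => (a i - b i).val, fun hd => hab ?_, fun i => ZMod.val_lt _, ?_⟩
  · funext i
    exact sub_eq_zero.mp ((ZMod.val_eq_zero _).mp (congrFun hd i))
  · have hdvd : ∀ j, (p : ℤ) ∣ ∑ i, ((a i - b i).val : ℤ) * v i j := by
      intro j
      rw [← ZMod.intCast_zmod_eq_zero_iff_dvd]
      have := congrFun hfab j
      simp only [f, Finset.sum_apply, Pi.smul_apply, smul_eq_mul] at this
      push_cast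
      simp only [ZMod.natCast_val, ZMod.cast_id', id, sub_mul, Finset.sum_sub_distrib, this, sub_self]
    choose x hx using hdvd
    refine ⟨x, funext fun j => ?_⟩
    simp only [Pi.smul_apply, Finset.sum_apply, smul_eq_mul, hx j]

theorem eq_zero_of_sum_smul_eq_zero_of_pointed {E ι : Type*} [AddCommGroup E] [Module ℝ E]
    [Fintype ι] [DecidableEq ι] {w : ι → E} (hw : ∀ i, w i ≠ 0)
    (hpointed : ∀ y : E,
      (∃ c : ι → ℝ, (∀ i, 0 ≤ c i) ∧ y = ∑ i, c i • w i) →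
      (∃ c : ι → ℝ, (∀ i, 0 ≤ c i) ∧ -y = ∑ i, c i • w i) → y = 0)
    {c : ι → ℝ} (hc : ∀ i, 0 ≤ c i) (hsum : ∑ i, c i • w i = 0) : c = 0 := by
  by_contra hne
  obtain ⟨i₀, hi₀⟩ := Function.ne_iff.mp hne
  -- `c i₀ • w i₀` lies in the cone, and so does its negative `∑_{i ≠ i₀} c i • w i`.
  have hy := hpointed (c i₀ • w i₀)
    ⟨Pi.single i₀ (c i₀), fun i => by by_cases h : i = i₀ <;> simp [h, hc], by simp [Pi.single_apply]⟩
    ⟨c - Pi.single i₀ (c i₀), fun i => by by_cases h : i = i₀ <;> simp [h, hc],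
      by simp [sub_smul, Finset.sum_sub_distrib, hsum, Pi.single_apply]⟩
  exact hw i₀ ((smul_eq_zero.mp hy).resolve_left hi₀)

theorem exists_p_power_lattice_point_general (p n m : ℕ) (hp : p.Prime) (hm : n < m)
    (v : Fin m → Fin n → ℤ) (hv : ∀ i, v i ≠ 0)
    (hconv : ∀ y : Fin n → ℝ,
      (∃ c : Fin m → ℝ, (∀ i, 0 ≤ c i) ∧ y = ∑ i, c i • (fun j => (v i j : ℝ))) →
      (∃ c : Fin m → ℝ, (∀ i, 0 ≤ c i) ∧ -y = ∑ i, c i • (fun j => (v i j : ℝ))) →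
      y = 0) :
    ∃ e : ℕ, 1 ≤ e ∧ ∃ x : Fin n → ℤ, x ≠ 0 ∧ ∃ a : Fin m → ℕ,
      (∀ i, a i < p ^ e) ∧ ((p : ℤ) ^ e) • x = ∑ i, (a i : ℤ) • v i := by
  obtain ⟨d, hd, hdp, x, hx⟩ :=
    exists_ne_zero_forall_lt_smul_eq_sum hp.one_lt (by simpa using hm) v
  refine ⟨1, le_rfl, x, ?_, d, by simpa using hdp, by simpa using hx⟩
  rintro rfl
  have hv_real : ∀ i, (fun j => (v i j : ℝ)) ≠ 0 := fun i h =>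
    hv i (funext fun j => by simpa using congrFun h j)
  have hsum : ∑ i, (d i : ℝ) • (fun j => (v i j : ℝ)) = 0 := by
    funext j
    have := congrFun hx j
    simp only [Pi.zero_apply, Finset.sum_apply, Pi.smul_apply, smul_eq_mul] at this ⊢
    exact_mod_cast this.symm
  have hd_real :=
    eq_zero_of_sum_smul_eq_zero_of_pointed hv_real hconv (fun i => Nat.cast_nonneg _) hsum
  exact hd (funext fun i => by simpa using congrFun hd_real i)

/-- If `m > n ≥ 1`, the `v_i` are nonzero, the cone they span is strongly
convex and saturated (`C ∩ ℤ^n = ⟨v⟩_ℕ`), then there are `e ≥ 1`, a nonzero lattice point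
`x` and naturals `a_i < p^e` with `p^e · x = ∑ a_i v_i`. -/
theorem exists_p_power_lattice_point (p n m : ℕ) (hp : p.Prime) (hn : 1 ≤ n) (hm : n < m)
    (v : Fin m → Fin n → ℤ) (hv : ∀ i, v i ≠ 0)
    (hconv : ∀ y : Fin n → ℝ,
      (∃ c : Fin m → ℝ, (∀ i, 0 ≤ c i) ∧ y = ∑ i, c i • (fun j => (v i j : ℝ))) →
      (∃ c : Fin m → ℝ, (∀ i, 0 ≤ c i) ∧ -y = ∑ i, c i • (fun j => (v i j : ℝ))) →
      y = 0)
    (hlat : ∀ x : Fin n → ℤ,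
      ((∃ c : Fin m → ℝ, (∀ i, 0 ≤ c i) ∧
          (fun j => (x j : ℝ)) = ∑ i, c i • (fun j => (v i j : ℝ))) ↔
        ∃ a : Fin m → ℕ, x = ∑ i, (a i : ℤ) • v i)) :
    ∃ e : ℕ, 1 ≤ e ∧ ∃ x : Fin n → ℤ, x ≠ 0 ∧ ∃ a : Fin m → ℕ,
      (∀ i, a i < p ^ e) ∧ ((p : ℤ) ^ e) • x = ∑ i, (a i : ℤ) • v i :=
  exists_p_power_lattice_point_general p n m hp hm v hv hconv
end

section
/- Let r ≥ 1 and let V ⊆ ℚ^r be a ℚ-linear subspace such that V intersects the nonnegative rational orthant { x ∈ ℚ^r : x_i ≥ 0 for all i } only in {0}. Then the ℝ-linear span of V inside ℝ^r intersects the nonnegative real orthant { x ∈ ℝ^r : x_i ≥ 0 for all i } only in {0}. -/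
/-- Auxiliary: if a real vector lies in the real span of (the real images of) a rational
subspace `V` and vanishes on a set `S` of coordinates, then it is a real linear combination
of elements of `V` each of which vanishes on `S`. -/
lemma rat_decomposition {r : ℕ} (V : Submodule ℚ (Fin r → ℚ)) (S : Set (Fin r))
    (w : Fin r → ℝ)
    (hw : w ∈ Submodule.span ℝ
      ((fun x : Fin r → ℚ => fun i => (x i : ℝ)) '' (V : Set (Fin r → ℚ))))
    (hS : ∀ j ∈ S, w j = 0) :
    ∃ (α : Type) (T : Finset α) (c : α → ℝ) (u : α → (Fin r → ℚ)),
      (∀ t ∈ T, u t ∈ V) ∧ (∀ t ∈ T, ∀ j ∈ S, u t j = 0) ∧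
      (∀ i, w i = ∑ t ∈ T, c t * (u t i : ℝ)) := by
  classical
  obtain ⟨n, f, g, hsum⟩ := Submodule.mem_span_set'.1 hw
  have hg : ∀ k : Fin n, ∃ v, v ∈ V ∧ (fun i => ((v i : ℝ))) = (g k : Fin r → ℝ) :=
    fun k => by
      obtain ⟨v, hv, hveq⟩ := (g k).2
      exact ⟨v, hv, hveq⟩
  choose v hvV hvg using hg
  set b := Module.Basis.ofVectorSpace ℚ ℝ with hb
  set T : Finset (Module.Basis.ofVectorSpaceIndex ℚ ℝ) :=
    Finset.univ.biUnion (fun k : Fin n => (b.repr (f k)).support) with hT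
  refine ⟨_, T, fun t => (b t : ℝ), fun t => ∑ k, b.repr (f k) t • v k, ?_, ?_, ?_⟩
  · intro t _
    exact Submodule.sum_mem _ fun k _ => Submodule.smul_mem _ _ (hvV k)
  · intro t _ j hj
    simp only [Finset.sum_apply, Pi.smul_apply, smul_eq_mul]
    have hwj : ∑ k, (v k j : ℚ) • f k = 0 := by
      have hh := congrFun hsum j
      simp only [Finset.sum_apply, Pi.smul_apply, smul_eq_mul] at hh
      rw [hS j hj] at hh
      rw [← hh]
      refine Finset.sum_congr rfl fun k _ => ?_
      rw [Rat.smul_def, ← congrFun (hvg k) j]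
      ring
    have hz : (b.repr (∑ k, (v k j : ℚ) • f k)) t = 0 := by rw [hwj, map_zero]; rfl
    rw [map_sum] at hz
    simp only [map_smul, Finsupp.coe_finset_sum, Finset.sum_apply, Finsupp.coe_smul,
      Pi.smul_apply, smul_eq_mul] at hz
    rw [← hz]
    exact Finset.sum_congr rfl fun k _ => mul_comm _ _
  · intro i
    have hfk : ∀ k : Fin n, ∑ t ∈ T, ((b.repr (f k) t : ℝ)) * (b t : ℝ) = f k := by
      intro k
      have h1 : ∑ t ∈ (b.repr (f k)).support, ((b.repr (f k) t : ℝ)) * (b t : ℝ) = f k := by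
        conv_rhs => rw [← b.linearCombination_repr (f k)]
        rw [Finsupp.linearCombination_apply, Finsupp.sum]
        exact Finset.sum_congr rfl fun t _ => (Rat.smul_def _ _).symm
      refine Eq.trans ?_ h1
      refine (Finset.sum_subset ?_ ?_).symm
      · exact Finset.subset_biUnion_of_mem (fun k : Fin n => (b.repr (f k)).support)
          (Finset.mem_univ k)
      · intro t _ ht
        rw [Finsupp.notMem_support_iff.1 ht]
        simp
    calc w i = ∑ k, f k * (v k i : ℝ) := by
          have hh := congrFun hsum i
          simp only [Finset.sum_apply, Pi.smul_apply, smul_eq_mul] at hh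
          rw [← hh]
          exact Finset.sum_congr rfl fun k _ => by rw [← congrFun (hvg k) i]
      _ = ∑ k, (∑ t ∈ T, ((b.repr (f k) t : ℝ)) * (b t : ℝ)) * (v k i : ℝ) := by
          refine Finset.sum_congr rfl fun k _ => by rw [hfk k]
      _ = ∑ t ∈ T, (b t : ℝ) * ((∑ k, b.repr (f k) t • v k) i : ℝ) := by
          simp only [Finset.sum_mul]
          rw [Finset.sum_comm]
          refine Finset.sum_congr rfl fun t _ => ?_
          simp only [Finset.sum_apply, Pi.smul_apply, smul_eq_mul]
          push_cast
          rw [Finset.mul_sum]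
          exact Finset.sum_congr rfl fun k _ => by ring

/-- If a `ℚ`-linear subspace `V ⊆ ℚ^r` meets the nonnegative rational
orthant only at `0`, then its `ℝ`-linear span in `ℝ^r` meets the nonnegative real orthant
only at `0`. -/
theorem real_span_avoids_orthant (r : ℕ) (hr : 1 ≤ r) (V : Submodule ℚ (Fin r → ℚ))
    (hV : ∀ x ∈ V, (∀ i, 0 ≤ x i) → x = 0) :
    ∀ y ∈ Submodule.span ℝ
        ((fun x : Fin r → ℚ => fun i => (x i : ℝ)) '' (V : Set (Fin r → ℚ))),
      (∀ i, 0 ≤ y i) → y = 0 := by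
  classical
  intro y hy hpos
  set W := Submodule.span ℝ
      ((fun x : Fin r → ℚ => fun i => (x i : ℝ)) '' (V : Set (Fin r → ℚ))) with hW
  by_contra hy0
  -- some coordinate of y is positive
  have hex : ∃ i₀, 0 < y i₀ := by
    by_contra h
    push_neg at h
    exact hy0 (funext fun i => le_antisymm (h i) (hpos i))
  obtain ⟨i₀, hi₀⟩ := hex
  -- the "positivity" predicate
  set P : Fin r → Prop := fun i => ∃ z, z ∈ W ∧ (∀ k, 0 ≤ z k) ∧ 0 < z i with hP
  have hPi₀ : P i₀ := ⟨y, hy, hpos, hi₀⟩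
  -- choose witnesses and sum them
  set zf : Fin r → (Fin r → ℝ) := fun i => if h : P i then h.choose else 0 with hzf
  have hzf_mem : ∀ i, zf i ∈ W := by
    intro i; rw [hzf]; dsimp only
    split
    · next h => exact h.choose_spec.1
    · exact Submodule.zero_mem _
  have hzf_nonneg : ∀ i k, 0 ≤ zf i k := by
    intro i k; rw [hzf]; dsimp only
    split
    · next h => exact h.choose_spec.2.1 k
    · exact le_refl _
  have hzf_pos : ∀ i, P i → 0 < zf i i := by
    intro i hi; rw [hzf]; dsimp only
    rw [dif_pos hi]
    exact hi.choose_spec.2.2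
  set zstar : Fin r → ℝ := ∑ i, zf i with hzstar
  have hzstar_mem : zstar ∈ W := Submodule.sum_mem _ fun i _ => hzf_mem i
  have hzstar_apply : ∀ k, zstar k = ∑ i, zf i k := by
    intro k; rw [hzstar]; simp [Finset.sum_apply]
  have hzstar_nonneg : ∀ k, 0 ≤ zstar k := fun k => by
    rw [hzstar_apply]; exact Finset.sum_nonneg fun i _ => hzf_nonneg i k
  have hzstar_pos : ∀ i, P i → 0 < zstar i := by
    intro i hi
    rw [hzstar_apply]
    exact lt_of_lt_of_le (hzf_pos i hi)
      (Finset.single_le_sum (fun j _ => hzf_nonneg j i) (Finset.mem_univ i))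
  have hzstar_zero : ∀ j ∈ {j | ¬ P j}, zstar j = 0 := by
    intro j hj
    by_contra h
    exact hj ⟨zstar, hzstar_mem, hzstar_nonneg,
      lt_of_le_of_ne (hzstar_nonneg j) (Ne.symm h)⟩
  -- decompose zstar
  obtain ⟨α, T, c, u, hu_mem, hu_zero, hrep⟩ :=
    rat_decomposition V {j | ¬ P j} zstar hzstar_mem hzstar_zero
  -- rational approximation
  set Pos : Finset (Fin r) := Finset.univ.filter P with hPos
  have hPosne : Pos.Nonempty := ⟨i₀, by simp [hPos, hPi₀]⟩
  set m : ℝ := (Pos.image fun i => zstar i).min' (hPosne.image _) with hm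
  have hm_le : ∀ i ∈ Pos, m ≤ zstar i := fun i hi =>
    Finset.min'_le _ _ (Finset.mem_image_of_mem _ hi)
  have hm_pos : 0 < m := by
    obtain ⟨x, hx, hxe⟩ := Finset.mem_image.1 ((Pos.image fun i => zstar i).min'_mem (hPosne.image _))
    have hp := hzstar_pos x (by simpa [hPos] using hx)
    rw [hxe] at hp
    exact hp
  set M : ℝ := 1 + ∑ t ∈ T, ∑ i, |(u t i : ℝ)| with hM
  have hM_pos : 0 < M := by
    have : (0:ℝ) ≤ ∑ t ∈ T, ∑ i, |(u t i : ℝ)| :=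
      Finset.sum_nonneg fun t _ => Finset.sum_nonneg fun i _ => abs_nonneg _
    linarith
  have hq : ∀ t : α, ∃ q : ℚ, |c t - (q:ℝ)| < m / M :=
    fun t => exists_rat_near (c t) (div_pos hm_pos hM_pos)
  choose q hqlt using hq
  -- the rational vector
  set vrat : Fin r → ℚ := ∑ t ∈ T, q t • u t with hvrat
  have hvrat_apply : ∀ i, vrat i = ∑ t ∈ T, q t * u t i := by
    intro i; rw [hvrat]; simp [Finset.sum_apply]
  have hvrat_mem : vrat ∈ V := Submodule.sum_mem _ fun t ht =>
    Submodule.smul_mem _ _ (hu_mem t ht)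
  have hvrat_pos : ∀ i, P i → 0 < vrat i := by
    intro i hi
    have hiPos : i ∈ Pos := by simp [hPos, hi]
    have hbound : ∀ t ∈ T, |c t - (q t : ℝ)| * |(u t i : ℝ)| ≤ (m / M) * ∑ i', |(u t i' : ℝ)| := by
      intro t _
      have h1 : |(u t i : ℝ)| ≤ ∑ i', |(u t i' : ℝ)| :=
        Finset.single_le_sum (fun i' _ => abs_nonneg ((u t i' : ℝ))) (Finset.mem_univ i)
      have h2 := (hqlt t).le
      calc |c t - (q t : ℝ)| * |(u t i : ℝ)| ≤ (m / M) * |(u t i : ℝ)| :=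
            mul_le_mul_of_nonneg_right h2 (abs_nonneg _)
        _ ≤ (m / M) * ∑ i', |(u t i' : ℝ)| :=
            mul_le_mul_of_nonneg_left h1 (le_of_lt (div_pos hm_pos hM_pos))
    have herr : |∑ t ∈ T, (c t - (q t : ℝ)) * (u t i : ℝ)| < m := by
      calc |∑ t ∈ T, (c t - (q t : ℝ)) * (u t i : ℝ)|
          ≤ ∑ t ∈ T, |(c t - (q t : ℝ)) * (u t i : ℝ)| := Finset.abs_sum_le_sum_abs _ _
        _ = ∑ t ∈ T, |c t - (q t : ℝ)| * |(u t i : ℝ)| := by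
            exact Finset.sum_congr rfl fun t _ => abs_mul _ _
        _ ≤ ∑ t ∈ T, (m / M) * ∑ i', |(u t i' : ℝ)| := Finset.sum_le_sum hbound
        _ = (m / M) * ∑ t ∈ T, ∑ i', |(u t i' : ℝ)| := by rw [Finset.mul_sum]
        _ < (m / M) * M := by
            apply mul_lt_mul_of_pos_left _ (div_pos hm_pos hM_pos)
            rw [hM]; linarith
        _ = m := div_mul_cancel₀ m (ne_of_gt hM_pos)
    have hsplit : ((vrat i : ℚ) : ℝ)
        = zstar i - ∑ t ∈ T, (c t - (q t : ℝ)) * (u t i : ℝ) := by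
      rw [hrep i, hvrat_apply i]
      push_cast
      rw [← Finset.sum_sub_distrib]
      exact Finset.sum_congr rfl fun t _ => by ring
    have : (0:ℝ) < ((vrat i : ℚ) : ℝ) := by
      rw [hsplit]
      have h3 : ∑ t ∈ T, (c t - (q t : ℝ)) * (u t i : ℝ) < m := lt_of_abs_lt herr
      have h4 := hm_le i hiPos
      linarith
    exact_mod_cast this
  have hvrat_nonneg : ∀ i, 0 ≤ vrat i := by
    intro i
    by_cases hi : P i
    · exact (hvrat_pos i hi).le
    · have : vrat i = ∑ t ∈ T, q t * u t i := hvrat_apply i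
      rw [this]
      refine le_of_eq (Finset.sum_eq_zero fun t ht => ?_).symm
      rw [hu_zero t ht i hi, mul_zero]
  have := hV vrat hvrat_mem hvrat_nonneg
  have := hvrat_pos i₀ hPi₀
  rw [‹vrat = 0›] at this
  simp at this
end

section
/- Let k ≥ 1 and let n be a natural number with n < k. Let a_1 ≤ a_2 ≤ … ≤ a_k be integers with a_1 ≥ 1, and let c_1, …, c_k be real numbers with 0 ≤ c_i < 1 for all i and c_1 + ⋯ + c_k > n. Then c_1 a_1 + ⋯ + c_k a_k > a_1 + ⋯ + a_n (the right-hand side being the empty sum 0 when n = 0). -/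
open Finset

/-!
Let `t = a_{n+1}`. Replacing each `a_i` by `t` changes `c_i a_i - [i ≤ n] a_i` only downwards:
for `i ≤ n` the coefficient `c_i - 1` is nonpositive and `a_i ≤ t`, for `i > n` the coefficient
`c_i` is nonnegative and `a_i ≥ t`. Summing, `∑ c_i a_i - ∑_{i ≤ n} a_i ≥ (∑ c_i - n) t > 0`.
-/

section Threshold

variable {ι R : Type*} [CommRing R] [PartialOrder R] [IsOrderedRing R]

lemma sub_indicator_mul_threshold_le (s : Finset ι) [DecidablePred (· ∈ s)] {c x t : R} {i : ι}
    (hc0 : i ∉ s → 0 ≤ c) (hc1 : i ∈ s → c ≤ 1)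
    (hxs : i ∈ s → x ≤ t) (hxt : i ∉ s → t ≤ x) :
    (c - if i ∈ s then 1 else 0) * t ≤ c * x - if i ∈ s then x else 0 := by
  by_cases hi : i ∈ s
  · simp only [hi, if_true, ← sub_one_mul]
    exact mul_le_mul_of_nonpos_left (hxs hi) (sub_nonpos.2 (hc1 hi))
  · simpa only [hi, if_false, sub_zero] using mul_le_mul_of_nonneg_left (hxt hi) (hc0 hi)

lemma sum_sub_card_mul_threshold_le [Fintype ι] (s : Finset ι) (c x : ι → R) (t : R)
    (hc0 : ∀ i ∉ s, 0 ≤ c i) (hc1 : ∀ i ∈ s, c i ≤ 1)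
    (hxs : ∀ i ∈ s, x i ≤ t) (hxt : ∀ i ∉ s, t ≤ x i) :
    (∑ i, c i - #s) * t ≤ ∑ i, c i * x i - ∑ i ∈ s, x i := by
  classical
  calc (∑ i, c i - #s) * t = ∑ i, (c i - if i ∈ s then 1 else 0) * t := by
        rw [← sum_mul, sum_sub_distrib, sum_boole, filter_univ_mem]
    _ ≤ ∑ i, (c i * x i - if i ∈ s then x i else 0) :=
        sum_le_sum fun i _ => sub_indicator_mul_threshold_le s (hc0 i) (hc1 i) (hxs i) (hxt i)
    _ = ∑ i, c i * x i - ∑ i ∈ s, x i := by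
        rw [sum_sub_distrib, ← sum_filter, filter_univ_mem]

end Threshold

lemma Fin.univ_filter_val_lt {k n : ℕ} (hn : n < k) :
    univ.filter (fun i : Fin k => (i : ℕ) < n) = Iio ⟨n, hn⟩ := by
  ext i
  simp [Fin.lt_def]

theorem weighted_sum_gt_initial_sum_general (k n : ℕ) (hn : n < k)
    (a : Fin k → ℤ) (ha : Monotone a) (hapos : ∀ i, 1 ≤ a i)
    (c : Fin k → ℝ) (hc : ∀ i, 0 ≤ c i ∧ c i < 1)
    (hsum : (n : ℝ) < ∑ i, c i) :
    (∑ i ∈ Finset.univ.filter (fun i : Fin k => (i : ℕ) < n), (a i : ℝ)) <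
      ∑ i, c i * (a i : ℝ) := by
  set m : Fin k := ⟨n, hn⟩
  have hbound := sum_sub_card_mul_threshold_le (Iio m) c (fun i => (a i : ℝ)) (a m)
    (fun i _ => (hc i).1) (fun i _ => (hc i).2.le)
    (fun i hi => by exact_mod_cast ha (mem_Iio.1 hi).le)
    (fun i hi => by exact_mod_cast ha (not_lt.1 (mem_Iio.not.1 hi)))
  rw [Fin.card_Iio] at hbound
  have hm : (0 : ℝ) < a m := by exact_mod_cast hapos m
  rw [Fin.univ_filter_val_lt hn]
  linarith [mul_pos (sub_pos.2 hsum) hm]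

/-- If `a_1 ≤ ⋯ ≤ a_k` are positive integers, `c_i ∈ [0,1)` and
`c_1 + ⋯ + c_k > n` with `n < k`, then `c_1 a_1 + ⋯ + c_k a_k > a_1 + ⋯ + a_n`. -/
theorem weighted_sum_gt_initial_sum (k n : ℕ) (hk : 1 ≤ k) (hn : n < k)
    (a : Fin k → ℤ) (ha : Monotone a) (hapos : ∀ i, 1 ≤ a i)
    (c : Fin k → ℝ) (hc : ∀ i, 0 ≤ c i ∧ c i < 1)
    (hsum : (n : ℝ) < ∑ i, c i) :
    (∑ i ∈ Finset.univ.filter (fun i : Fin k => (i : ℕ) < n), (a i : ℝ)) <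
      ∑ i, c i * (a i : ℝ) :=
  weighted_sum_gt_initial_sum_general k n hn a ha hapos c hc hsum
end

section
/- Fix natural numbers d, k with 1 ≤ k ≤ d, a nondecreasing sequence of positive integers b_1 ≤ b_2 ≤ … ≤ b_k, and a natural number l with 1 ≤ l ≤ d. Set n := l − (d+1−k) if l > d+1−k and n := 0 otherwise. Then b_1 + ⋯ + b_n (the empty sum 0 when n = 0) is the least element of J_l: it belongs to J_l and every element of J_l is ≥ b_1 + ⋯ + b_n. In particular, the minimum of J_l is 0 if and only if l ≤ d+1−k. -/
open Finset

def Jl (d k : ℕ) (hk : k ≤ d) (b : Fin k → ℤ) (l : ℕ) : Set ℤ :=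
  {j | ∃ c : Fin (d + 1) → ℝ, (∀ i, 0 ≤ c i ∧ c i < 1) ∧ (∑ i, c i) = (l : ℝ) ∧
    j = ⌊∑ i : Fin k, c (Fin.castLE (Nat.le_succ_of_le hk) i) * (b i : ℝ)⌋}

/-!
The lower bound is a rearrangement argument: since `b` is monotone and nonnegative, weights
`c_i ∈ [0, 1]` whose total on the first `k` coordinates is at least `n` (the other `d + 1 - k`
coordinates carry less than `d + 1 - k`) give `∑ c_i b_i ≥ b_1 + ⋯ + b_n`. The bound is attained
at the vertex of `[0,1]^{d+1} ∩ {∑ c = l}` that puts weight `1` on `b_1, …, b_n`; moving from it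
a little towards the interior point `(l/(d+1), …, l/(d+1))` gives admissible weights (all `< 1`)
whose weighted sum stays below `b_1 + ⋯ + b_n + 1`.
-/

theorem sum_le_sum_mul_of_card_le_sum {ι : Type*} [Fintype ι] [DecidableEq ι] (s : Finset ι)
    (a b : ι → ℝ) (ha0 : ∀ i, 0 ≤ a i) (ha1 : ∀ i, a i ≤ 1) (hs : (#s : ℝ) ≤ ∑ i, a i)
    {τ : ℝ} (hτ : 0 ≤ τ) (hbs : ∀ i ∈ s, b i ≤ τ) (hbsc : ∀ i ∉ s, τ ≤ b i) :
    ∑ i ∈ s, b i ≤ ∑ i, a i * b i := by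
  have key : ∀ i ∈ univ, τ * (a i - if i ∈ s then 1 else 0)
      ≤ a i * b i - if i ∈ s then b i else 0 := by
    intro i _
    by_cases hi : i ∈ s
    · simp only [hi, if_true]; nlinarith [hbs i hi, ha1 i]
    · simp only [hi, if_false, sub_zero]
      nlinarith [mul_le_mul_of_nonneg_left (hbsc i hi) (ha0 i)]
  have := sum_le_sum key
  simp only [← mul_sum, sum_sub_distrib, sum_ite_mem, univ_inter, sum_const, nsmul_one] at this
  nlinarith [mul_nonneg hτ (sub_nonneg.2 hs)]

theorem sum_filter_lt_le_sum_mul {k n : ℕ} (hnk : n < k) (a b : Fin k → ℝ) (hb : Monotone b)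
    (hb0 : ∀ i, 0 ≤ b i) (ha0 : ∀ i, 0 ≤ a i) (ha1 : ∀ i, a i ≤ 1) (hn : (n : ℝ) ≤ ∑ i, a i) :
    ∑ i ∈ univ.filter (fun i : Fin k => (i : ℕ) < n), b i ≤ ∑ i, a i * b i := by
  refine sum_le_sum_mul_of_card_le_sum _ a b ha0 ha1 ?_ (hb0 ⟨n, hnk⟩) ?_ ?_
  · rwa [Fin.card_filter_val_lt, min_eq_right hnk.le]
  · exact fun i hi => hb (Fin.le_def.2 (le_of_lt (by simpa using hi)))
  · exact fun i hi => hb (Fin.le_def.2 (not_lt.1 (by simpa using hi)))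

theorem sum_sub_le_sum_castLE {m k : ℕ} (h : k ≤ m) (c : Fin m → ℝ) (hc : ∀ i, c i ≤ 1) :
    ∑ i, c i - (m - k : ℕ) ≤ ∑ i : Fin k, c (Fin.castLE h i) := by
  have hsplit := sum_add_sum_compl (univ.map (Fin.castLEEmb h)) c
  rw [sum_map] at hsplit
  have hrest : ∑ i ∈ (univ.map (Fin.castLEEmb h))ᶜ, c i ≤ (m - k : ℕ) := by
    have := sum_le_card_nsmul (univ.map (Fin.castLEEmb h))ᶜ c 1 fun i _ => hc i
    rwa [card_compl, card_map, card_univ, Fintype.card_fin, Fintype.card_fin, nsmul_one] at this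
  simp only [Fin.castLEEmb_apply] at hsplit
  linarith

section

variable {d k : ℕ} (hkd : k ≤ d) (b : Fin k → ℤ)

def weightedSum (c : Fin (d + 1) → ℝ) : ℝ :=
  ∑ i : Fin k, c (Fin.castLE (Nat.le_succ_of_le hkd) i) * (b i : ℝ)

def initialSum (n : ℕ) : ℤ :=
  ∑ i ∈ univ.filter (fun i : Fin k => (i : ℕ) < n), b i

theorem initialSum_le_weightedSum (hk : 0 < k) {l : ℕ} (hld : l ≤ d) (hb : Monotone b)
    (hb0 : ∀ i, 0 ≤ b i) (c : Fin (d + 1) → ℝ) (hc0 : ∀ i, 0 ≤ c i) (hc1 : ∀ i, c i ≤ 1)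
    (hc : ∑ i, c i = l) :
    (initialSum b (l - (d + 1 - k)) : ℝ) ≤ weightedSum hkd b c := by
  have hn : ((l - (d + 1 - k) : ℕ) : ℝ) ≤
      ∑ i : Fin k, c (Fin.castLE (Nat.le_succ_of_le hkd) i) := by
    rcases le_total (d + 1 - k) l with hl | hl
    · have := sum_sub_le_sum_castLE (Nat.le_succ_of_le hkd) c hc1
      rw [hc] at this
      push_cast [hl]
      simpa using this
    · rw [Nat.sub_eq_zero_of_le hl, Nat.cast_zero]
      exact sum_nonneg fun i _ => hc0 _
  have := sum_filter_lt_le_sum_mul (by omega) _ _ (fun i j hij => Int.cast_le.2 (hb hij))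
    (fun i => by exact_mod_cast hb0 i) (fun i => hc0 _) (fun i => hc1 _) hn
  simpa [initialSum, weightedSum] using this

theorem exists_weightedSum_eq_initialSum {n l : ℕ} (hnk : n ≤ k) (hnl : n ≤ l)
    (hl : l ≤ n + (d + 1 - k)) :
    ∃ x : Fin (d + 1) → ℝ, (∀ i, 0 ≤ x i ∧ x i ≤ 1) ∧ ∑ i, x i = l ∧
      weightedSum hkd b x = initialSum b n := by
  set m : ℕ := d + 1 - k
  have hm : (0 : ℝ) < m := by exact_mod_cast (show 0 < m by omega)
  set r : ℝ := ((l - n : ℕ) : ℝ) / m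
  have hr0 : 0 ≤ r := by positivity
  have hr1 : r ≤ 1 := (div_le_one hm).2 (by exact_mod_cast (show l - n ≤ m by omega))
  set g : ℕ → ℝ := fun j => if j < n then 1 else if j < k then 0 else r
  refine ⟨fun i => g i, fun i => ?_, ?_, ?_⟩
  · dsimp only [g]; split_ifs <;> norm_num [hr0, hr1]
  · rw [Fin.sum_univ_eq_sum_range g, ← sum_range_add_sum_Ico g (show k ≤ d + 1 by omega),
      ← sum_range_add_sum_Ico g hnk]
    have h₁ : ∑ j ∈ range n, g j = n := by
      rw [sum_congr rfl fun j hj => if_pos (mem_range.1 hj)]; simp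
    have h₂ : ∑ j ∈ Ico n k, g j = 0 :=
      sum_eq_zero fun j hj => by
        have := mem_Ico.1 hj; simp only [g]; rw [if_neg (by omega), if_pos (by omega)]
    have h₃ : ∑ j ∈ Ico k (d + 1), g j = m * r := by
      rw [sum_congr rfl fun j hj => by
        have := mem_Ico.1 hj; simp only [g]; rw [if_neg (by omega), if_neg (by omega)]]
      simp [m]
    rw [h₁, h₂, h₃, mul_div_cancel₀ _ hm.ne', Nat.cast_sub hnl]
    ring
  · simp only [weightedSum, initialSum, Fin.val_castLE, g, Int.cast_sum, sum_filter]
    refine sum_congr rfl fun i _ => ?_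
    split_ifs <;> simp_all

theorem initialSum_mem_Jl (hk : 0 < k) (hb : Monotone b) (hb0 : ∀ i, 0 ≤ b i) {l : ℕ}
    (hld : l ≤ d) : initialSum b (l - (d + 1 - k)) ∈ Jl d k hkd b l := by
  obtain ⟨x, hx, hxsum, hxval⟩ :=
    exists_weightedSum_eq_initialSum hkd b (n := l - (d + 1 - k)) (l := l)
      (by omega) (by omega) (by omega)
  set S : ℝ := (initialSum b (l - (d + 1 - k)) : ℝ)
  set y : Fin (d + 1) → ℝ := fun _ => l / (d + 1)
  have hy1 : (l : ℝ) / (d + 1) < 1 :=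
    (div_lt_one (by positivity)).2 (by exact_mod_cast Nat.lt_succ_of_le hld)
  have hysum : ∑ i, y i = l := by simp [y]; field_simp
  have hSy := initialSum_le_weightedSum hkd b hk hld hb hb0 y (fun _ => by positivity)
    (fun _ => hy1.le) hysum
  set μ : ℝ := 1 / (weightedSum hkd b y - S + 1)
  have hμ0 : 0 < μ := by positivity
  have hμ1 : μ ≤ 1 := (div_le_one (by linarith)).2 (by linarith)
  set c : Fin (d + 1) → ℝ := fun i => (1 - μ) * x i + μ * y i
  have hc : weightedSum hkd b c = S + μ * (weightedSum hkd b y - S) := by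
    have hlin : weightedSum hkd b c = (1 - μ) * weightedSum hkd b x + μ * weightedSum hkd b y := by
      simp only [weightedSum, c, add_mul, sum_add_distrib, mul_sum, mul_assoc]
    rw [hlin, hxval]; ring
  refine ⟨c, fun i => ⟨?_, ?_⟩, ?_, ?_⟩
  · have := (hx i).1; have : 0 ≤ y i := by positivity
    simp only [c]; nlinarith
  · have := (hx i).2; simp only [c, y]; nlinarith
  · simp only [c, sum_add_distrib, ← mul_sum, hxsum, hysum]; ring
  · have hstep : μ * (weightedSum hkd b y - S) < 1 := by
      rw [one_div_mul_eq_div, div_lt_one (by linarith)]; linarith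
    change _ = ⌊weightedSum hkd b c⌋
    rw [eq_comm, hc, Int.floor_eq_iff]
    constructor <;> nlinarith

theorem initialSum_eq_zero_iff (hk : 0 < k) (hb : ∀ i, 0 < b i) {n : ℕ} :
    initialSum b n = 0 ↔ n = 0 := by
  refine ⟨fun h => ?_, fun hn => by simp [initialSum, hn]⟩
  by_contra hn
  have : 0 < initialSum b n :=
    sum_pos (fun i _ => hb i) ⟨⟨0, hk⟩, by simpa using Nat.pos_of_ne_zero hn⟩
  omega

end

theorem Jl_min_general (d k : ℕ) (hk1 : 1 ≤ k) (hkd : k ≤ d)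
    (b : Fin k → ℤ) (hb : Monotone b) (hbpos : ∀ i, 1 ≤ b i)
    (l : ℕ) (hld : l ≤ d) :
    (∑ i ∈ Finset.univ.filter (fun i : Fin k => (i : ℕ) < l - (d + 1 - k)), b i)
        ∈ Jl d k hkd b l ∧
    (∀ j ∈ Jl d k hkd b l,
      (∑ i ∈ Finset.univ.filter (fun i : Fin k => (i : ℕ) < l - (d + 1 - k)), b i) ≤ j) ∧
    ((∑ i ∈ Finset.univ.filter (fun i : Fin k => (i : ℕ) < l - (d + 1 - k)), b i) = 0 ↔
      l ≤ d + 1 - k) := by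
  have hb0 : ∀ i, 0 ≤ b i := fun i => zero_le_one.trans (hbpos i)
  refine ⟨initialSum_mem_Jl hkd b hk1 hb hb0 hld, ?_, ?_⟩
  · rintro j ⟨c, hc, hcsum, rfl⟩
    exact Int.le_floor.2 <| initialSum_le_weightedSum hkd b hk1 hld hb hb0 c
      (fun i => (hc i).1) (fun i => (hc i).2.le) hcsum
  · exact (initialSum_eq_zero_iff b hk1 hbpos).trans (by omega)

/-- With `n := l − (d+1−k)` (truncated at `0`), the number
`b_1 + ⋯ + b_n` is the least element of `J_l`; in particular `min J_l = 0` iff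
`l ≤ d+1−k`. -/
theorem Jl_min (d k : ℕ) (hk1 : 1 ≤ k) (hkd : k ≤ d)
    (b : Fin k → ℤ) (hb : Monotone b) (hbpos : ∀ i, 1 ≤ b i)
    (l : ℕ) (hl1 : 1 ≤ l) (hld : l ≤ d) :
    (∑ i ∈ Finset.univ.filter (fun i : Fin k => (i : ℕ) < l - (d + 1 - k)), b i)
        ∈ Jl d k hkd b l ∧
    (∀ j ∈ Jl d k hkd b l,
      (∑ i ∈ Finset.univ.filter (fun i : Fin k => (i : ℕ) < l - (d + 1 - k)), b i) ≤ j) ∧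
    ((∑ i ∈ Finset.univ.filter (fun i : Fin k => (i : ℕ) < l - (d + 1 - k)), b i) = 0 ↔
      l ≤ d + 1 - k) :=
  Jl_min_general d k hk1 hkd b hb hbpos l hld
end

section
/- Fix natural numbers d, k with 1 ≤ k ≤ d, a nondecreasing sequence of positive integers b_1 ≤ b_2 ≤ … ≤ b_k, and a natural number l with 1 ≤ l ≤ d. Let B be the sum of the min(l,k) largest of the b_i, i.e., B := b_{k+1−min(l,k)} + ⋯ + b_k. Then B − 1 ∈ J_l. -/
open Finset

/-- If `B` is the sum of the `min(l,k)` largest of the `b_i`, then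
`B − 1 ∈ J_l`. -/
theorem Jl_max_mem (d k : ℕ) (hk1 : 1 ≤ k) (hkd : k ≤ d)
    (b : Fin k → ℤ) (hb : Monotone b) (hbpos : ∀ i, 1 ≤ b i)
    (l : ℕ) (hl1 : 1 ≤ l) (hld : l ≤ d) :
    (∑ i ∈ Finset.univ.filter (fun i : Fin k => k - min l k ≤ (i : ℕ)), b i) - 1
      ∈ Jl d k hkd b l := by
  set m := min l k with hm
  set N := d + 1 - k with hNdef
  have hmk : m ≤ k := min_le_right _ _
  have hml : m ≤ l := min_le_left _ _
  have hm1 : 1 ≤ m := by omega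
  have hN1 : 1 ≤ N := by omega
  set B : ℤ := ∑ i ∈ Finset.univ.filter (fun i : Fin k => k - m ≤ (i : ℕ)), b i with hBdef
  have hi0mem : (⟨k - 1, by omega⟩ : Fin k) ∈
      Finset.univ.filter (fun i : Fin k => k - m ≤ (i : ℕ)) := by
    simp only [Finset.mem_filter, Finset.mem_univ, true_and]
    omega
  have hB1 : (1 : ℤ) ≤ B :=
    le_trans (hbpos _) (Finset.single_le_sum (fun i _ => le_trans zero_le_one (hbpos i)) hi0mem)
  have hBR : (1 : ℝ) ≤ (B : ℝ) := by exact_mod_cast hB1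
  have hmR : (1 : ℝ) ≤ (m : ℝ) := by exact_mod_cast hm1
  have hNR : (1 : ℝ) ≤ (N : ℝ) := by exact_mod_cast hN1
  set ε : ℝ := 1 / (2 * ((B : ℝ) + m)) with hε
  have hden : (0 : ℝ) < 2 * ((B : ℝ) + m) := by linarith
  have hε0 : 0 < ε := by rw [hε]; positivity
  have hεid : ε * (2 * ((B : ℝ) + m)) = 1 := by
    rw [hε]; field_simp
  have hεB : ε * B ≤ 1 / 2 := by nlinarith [mul_nonneg hε0.le (by linarith : (0:ℝ) ≤ (m:ℝ))]
  have hεm : ε * m ≤ 1 / 2 := by nlinarith [mul_nonneg hε0.le (by linarith : (0:ℝ) ≤ (B:ℝ))]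
  have hεhalf : ε ≤ 1 / 2 := by nlinarith
  set r : ℝ := (l : ℝ) - m + m * ε with hr
  have hlmR : ((m : ℝ)) ≤ (l : ℝ) := by exact_mod_cast hml
  have hr0 : 0 ≤ r := by
    have : 0 ≤ (m : ℝ) * ε := by positivity
    rw [hr]; linarith
  have hkey : (l : ℝ) + 1 ≤ (N : ℝ) + m := by
    have : l + 1 ≤ N + m := by omega
    exact_mod_cast this
  have hrN : r < N := by
    rw [hr]; nlinarith
  have hNne : (N : ℝ) ≠ 0 := by linarith
  refine ⟨fun i => if (i : ℕ) < k then (if k - m ≤ (i : ℕ) then 1 - ε else 0) else r / N,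
      ?_, ?_, ?_⟩
  · intro i
    dsimp only
    split_ifs with h1 h2
    · constructor <;> linarith
    · constructor <;> norm_num
    · constructor
      · positivity
      · rw [div_lt_one (by linarith)]; exact hrN
  · rw [Fin.sum_univ_eq_sum_range
      (fun n => if n < k then (if k - m ≤ n then 1 - ε else 0) else r / N) (d + 1)]
    rw [Finset.range_eq_Ico,
      ← Finset.sum_Ico_consecutive _ (Nat.zero_le k) (by omega : k ≤ d + 1),
      ← Finset.sum_Ico_consecutive _ (Nat.zero_le (k - m)) (by omega : k - m ≤ k)]
    have h1 : ∑ n ∈ Finset.Ico 0 (k - m),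
        (if n < k then (if k - m ≤ n then 1 - ε else 0) else r / N) = 0 := by
      apply Finset.sum_eq_zero
      intro n hn
      rw [Finset.mem_Ico] at hn
      rw [if_pos (by omega), if_neg (by omega)]
    have h2 : ∑ n ∈ Finset.Ico (k - m) k,
        (if n < k then (if k - m ≤ n then 1 - ε else 0) else r / N) = (m : ℝ) * (1 - ε) := by
      rw [Finset.sum_congr rfl (fun n hn => ?_), Finset.sum_const, Nat.card_Ico]
      · have : k - (k - m) = m := by omega
        rw [this, nsmul_eq_mul]
      · rw [Finset.mem_Ico] at hn
        rw [if_pos (by omega), if_pos (by omega)]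
    have h3 : ∑ n ∈ Finset.Ico k (d + 1),
        (if n < k then (if k - m ≤ n then 1 - ε else 0) else r / N) = (N : ℝ) * (r / N) := by
      rw [Finset.sum_congr rfl (fun n hn => ?_), Finset.sum_const, Nat.card_Ico]
      · rw [nsmul_eq_mul]
      · rw [Finset.mem_Ico] at hn
        rw [if_neg (by omega)]
    rw [h1, h2, h3, mul_div_cancel₀ _ hNne, hr]
    ring
  · have hterm : ∀ i : Fin k,
        (if ((Fin.castLE (Nat.le_succ_of_le hkd) i : Fin (d + 1)) : ℕ) < k then
          (if k - m ≤ ((Fin.castLE (Nat.le_succ_of_le hkd) i : Fin (d + 1)) : ℕ) then 1 - ε else 0)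
          else r / N) * (b i : ℝ)
        = if k - m ≤ (i : ℕ) then (1 - ε) * (b i : ℝ) else 0 := by
      intro i
      simp only [Fin.coe_castLE]
      rw [if_pos i.isLt, ite_mul, zero_mul]
    rw [Finset.sum_congr rfl (fun i _ => hterm i), ← Finset.sum_filter, ← Finset.mul_sum]
    have hsum : ∑ i ∈ Finset.univ.filter (fun i : Fin k => k - m ≤ (i : ℕ)), (b i : ℝ)
        = (B : ℝ) := by rw [hBdef]; push_cast; ring
    rw [hsum, eq_comm, Int.floor_eq_iff]
    have hεBpos : 0 < ε * B := mul_pos hε0 (by linarith)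
    have hexp : (1 - ε) * (B : ℝ) = (B : ℝ) - ε * B := by ring
    constructor
    · push_cast
      linarith
    · push_cast
      linarith
end

section
/- Fix natural numbers d, k with 1 ≤ k ≤ d, a nondecreasing sequence of positive integers b_1 ≤ b_2 ≤ … ≤ b_k, and a natural number l with 1 ≤ l ≤ d. Then J_l is a discrete interval of integers: if j, j' ∈ J_l and j ≤ m ≤ j' for an integer m, then m ∈ J_l. -/
open Finset

/-- `J_l` is a discrete interval of integers: any integer between two
of its elements also belongs to it. -/
theorem Jl_is_interval (d k : ℕ) (hk1 : 1 ≤ k) (hkd : k ≤ d)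
    (b : Fin k → ℤ) (hb : Monotone b) (hbpos : ∀ i, 1 ≤ b i)
    (l : ℕ) (hl1 : 1 ≤ l) (hld : l ≤ d) :
    ∀ j ∈ Jl d k hkd b l, ∀ j' ∈ Jl d k hkd b l, ∀ m : ℤ,
      j ≤ m → m ≤ j' → m ∈ Jl d k hkd b l := by
  rintro j ⟨c, hc, hcs, rfl⟩ j' ⟨c', hc', hcs', rfl⟩ m hm1 hm2
  set x := ∑ i : Fin k, c (Fin.castLE (Nat.le_succ_of_le hkd) i) * (b i : ℝ) with hxdef
  set x' := ∑ i : Fin k, c' (Fin.castLE (Nat.le_succ_of_le hkd) i) * (b i : ℝ) with hxdef'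
  rcases hm1.eq_or_lt with heq | hlt
  · exact ⟨c, hc, hcs, heq.symm⟩
  · have hxm : x < (m : ℝ) := by
      have h1 : ((⌊x⌋ : ℝ) + 1) ≤ (m : ℝ) := by exact_mod_cast hlt
      linarith [Int.lt_floor_add_one x]
    have hmx' : (m : ℝ) ≤ x' := by
      have h1 : (m : ℝ) ≤ (⌊x'⌋ : ℝ) := by exact_mod_cast hm2
      linarith [Int.floor_le x']
    have hd : (0:ℝ) < x' - x := by linarith
    set t : ℝ := ((m : ℝ) - x) / (x' - x) with htdef
    have ht0 : 0 ≤ t := div_nonneg (by linarith) hd.le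
    have ht1 : t ≤ 1 := (div_le_one hd).2 (by linarith)
    have htx : t * (x' - x) = (m : ℝ) - x := div_mul_cancel₀ _ hd.ne'
    refine ⟨fun i => (1 - t) * c i + t * c' i, fun i => ?_, ?_, ?_⟩
    · obtain ⟨h1, h2⟩ := hc i
      obtain ⟨h1', h2'⟩ := hc' i
      constructor
      · show (0:ℝ) ≤ (1 - t) * c i + t * c' i
        have := mul_nonneg (by linarith : (0:ℝ) ≤ 1 - t) h1
        have := mul_nonneg ht0 h1'
        linarith
      · show (1 - t) * c i + t * c' i < 1
        rcases ht1.eq_or_lt with heq1 | hlt1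
        · rw [heq1]; ring_nf; linarith
        · nlinarith [mul_pos (by linarith : (0:ℝ) < 1 - t) (by linarith : (0:ℝ) < 1 - c i),
            mul_nonneg ht0 (by linarith : (0:ℝ) ≤ 1 - c' i)]
    · rw [Finset.sum_add_distrib, ← Finset.mul_sum, ← Finset.mul_sum, hcs, hcs']
      ring
    · have hval : (∑ i : Fin k, ((1 - t) * c (Fin.castLE (Nat.le_succ_of_le hkd) i)
          + t * c' (Fin.castLE (Nat.le_succ_of_le hkd) i)) * (b i : ℝ)) = (m : ℝ) := by
        have : (∑ i : Fin k, ((1 - t) * c (Fin.castLE (Nat.le_succ_of_le hkd) i)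
            + t * c' (Fin.castLE (Nat.le_succ_of_le hkd) i)) * (b i : ℝ))
            = (1 - t) * x + t * x' := by
          rw [hxdef, hxdef', Finset.mul_sum, Finset.mul_sum, ← Finset.sum_add_distrib]
          exact Finset.sum_congr rfl fun i _ => by ring
        rw [this]
        nlinarith [htx]
      rw [hval, Int.floor_intCast]
end
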